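/- (Floquet decomposition) Let A : ℝ → Matrix (Fin n) (Fin n) ℂ be continuous and T-periodic, and let Φ(t) be the fundamental solution of Φ' = A(t)Φ with Φ(0) = I. If the monodromy matrix Φ(T) is invertible and has a (complex) logarithm T·D, then Φ(t) = P(t) e^{tD} where P(t) = Φ(t) e^{-tD} is T-periodic and P(0) = I. -/

import Mathlib

attribute [local instance] Matrix.normedAddCommGroup Matrix.normedSpace

/-- Floquet decomposition: if `Φ` is the fundamental solution of the `T`-periodic
linear system `Φ' = A(t)Φ`, `Φ(0) = I`, the monodromy matrix `Φ(T)` is invertible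
and `e^{TD} = Φ(T)` for some matrix `D`, then `Φ(t) = P(t) e^{tD}` where
`P(t) = Φ(t) e^{-tD}` is `T`-periodic and `P(0) = I`. -/
theorem floquet_decomposition
    (n : ℕ) (T : ℝ)
    (A : ℝ → Matrix (Fin n) (Fin n) ℂ)
    (hA : Continuous A)
    (hAper : ∀ t, A (t + T) = A t)
    (Φ : ℝ → Matrix (Fin n) (Fin n) ℂ)
    (hΦ0 : Φ 0 = 1)
    (hΦ : ∀ t, HasDerivAt Φ (A t * Φ t) t)
    -- uniqueness of solutions of the linear ODE
    (huniq : ∀ Ψ₁ Ψ₂ : ℝ → Matrix (Fin n) (Fin n) ℂ,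
      (∀ t, HasDerivAt Ψ₁ (A t * Ψ₁ t) t) →
      (∀ t, HasDerivAt Ψ₂ (A t * Ψ₂ t) t) →
      Ψ₁ 0 = Ψ₂ 0 → Ψ₁ = Ψ₂)
    (hmono : IsUnit (Φ T))
    (D : Matrix (Fin n) (Fin n) ℂ)
    (hD : NormedSpace.exp ((T : ℂ) • D) = Φ T) :
    (∀ t : ℝ, Φ t = (Φ t * NormedSpace.exp (-((t : ℂ) • D))) *
        NormedSpace.exp ((t : ℂ) • D)) ∧
    (∀ t : ℝ, Φ (t + T) * NormedSpace.exp (-(((t + T : ℝ) : ℂ) • D)) =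
        Φ t * NormedSpace.exp (-((t : ℂ) • D))) ∧
    Φ 0 * NormedSpace.exp (-(((0 : ℝ) : ℂ) • D)) = 1 := by
  -- exp(-M) * exp(M) = 1 and exp(M) * exp(-M) = 1
  have hkey : ∀ M : Matrix (Fin n) (Fin n) ℂ,
      NormedSpace.exp (-M) * NormedSpace.exp M = 1 := fun M => by
    rw [← Matrix.exp_add_of_commute (-M) M ((Commute.refl M).neg_left),
      neg_add_cancel, NormedSpace.exp_zero]
  have hkey' : ∀ M : Matrix (Fin n) (Fin n) ℂ,
      NormedSpace.exp M * NormedSpace.exp (-M) = 1 := fun M => by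
    rw [← Matrix.exp_add_of_commute M (-M) ((Commute.refl M).neg_right),
      add_neg_cancel, NormedSpace.exp_zero]
  -- Φ(t + T) = Φ(t) * Φ(T) by uniqueness
  have hshift : ∀ t, Φ (t + T) = Φ t * Φ T := by
    have h1 : ∀ t, HasDerivAt (fun s => Φ (s + T)) (A t * Φ (t + T)) t := by
      intro t
      have := (hΦ (t + T)).scomp t ((hasDerivAt_id t).add_const T)
      simp only [hAper t, Function.comp_def, id, one_smul] at this
      exact this
    have h2 : ∀ t, HasDerivAt (fun s => Φ s * Φ T) (A t * (Φ t * Φ T)) t := by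
      intro t
      let L : Matrix (Fin n) (Fin n) ℂ →L[ℝ] Matrix (Fin n) (Fin n) ℂ :=
        LinearMap.toContinuousLinearMap ((LinearMap.mulRight ℂ (Φ T)).restrictScalars ℝ)
      have hL : ∀ x, L x = x * Φ T := fun x => rfl
      have := L.hasFDerivAt.comp_hasDerivAt t (hΦ t)
      simp only [Function.comp_def] at this
      have e : A t * Φ t * Φ T = A t * (Φ t * Φ T) := mul_assoc _ _ _
      exact e ▸ this
    have h0 : (fun s => Φ (s + T)) 0 = (fun s => Φ s * Φ T) 0 := by
      simp [hΦ0]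
    have := huniq _ _ h1 h2 h0
    intro t
    exact congrFun this t
  refine ⟨fun t => ?_, fun t => ?_, ?_⟩
  · rw [mul_assoc, hkey, mul_one]
  · have hcast : (((t + T : ℝ) : ℂ)) • D = (T : ℂ) • D + (t : ℂ) • D := by
      push_cast
      rw [add_smul, add_comm]
    rw [hshift t, hcast, neg_add,
      Matrix.exp_add_of_commute _ _ (((Commute.refl D).smul_left _).smul_right _).neg_left.neg_right,
      ← mul_assoc, mul_assoc (Φ t), ← hD, hkey', mul_one]
  · simp [hΦ0]
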